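/- If argument a gen-rebuts argument b in a Deductive ASPIC⊖ argumentation system, then there exists an argument a′ of the form a′ : a → ¬⋀ ADSub(b)^C, i.e., ¬⋀Γ ⊨_C ¬⋀ ADSub(b)^C where a^C = ¬⋀Γ for some Γ ⊆ Sub(b)^C. -/

import Mathlib

namespace ASPIC

/-- An underlying logical language: formulas, atoms, interpretations, a classical
negation and conjunction, and the interpolation-style assumption on syntactically
disjoint sets of formulas. -/
structure Logic where
  F : Type
  Atom : Type
  atoms : F → Set Atom
  I : Type
  inhab : Nonempty I
  Models : I → F → Prop
  neg : F → F
  conj : F → F → F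
  neg_spec : ∀ i φ, Models i (neg φ) ↔ ¬ Models i φ
  conj_spec : ∀ i φ ψ, Models i (conj φ ψ) ↔ (Models i φ ∧ Models i ψ)
  atoms_neg : ∀ φ, atoms (neg φ) = atoms φ
  atoms_conj : ∀ φ ψ, atoms (conj φ ψ) = atoms φ ∪ atoms ψ
  interp : ∀ Γ Δ : Set F, (∀ φ ∈ Γ, ∀ ψ ∈ Δ, atoms φ ∩ atoms ψ = ∅) →
    (∃ i, ∀ φ ∈ Γ, Models i φ) → (∃ i, ∀ ψ ∈ Δ, Models i ψ) →
    (∃ i, (∀ φ ∈ Γ, Models i φ) ∧ (∀ ψ ∈ Δ, Models i ψ))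

/-- The model-based consequence relation ⊨_C. -/
def Conseq (L : Logic) (Γ : Set L.F) (φ : L.F) : Prop :=
  ∀ i, (∀ ψ ∈ Γ, L.Models i ψ) → L.Models i φ

/-- φ = −ψ: one formula is the negation of the other. -/
def negOf (L : Logic) (φ ψ : L.F) : Prop := φ = L.neg ψ ∨ ψ = L.neg φ

/-- Conjunction of a nonempty list of formulas: conjL L φ [ψ₁,…] = φ ∧ ψ₁ ∧ … . -/
def conjL (L : Logic) : L.F → List L.F → L.F
  | φ, [] => φ
  | φ, ψ :: l => L.conj φ (conjL L ψ l)

/-- A (defeasible) rule: antecedents and conclusion. -/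
abbrev Rule (L : Logic) := List L.F × L.F

/-- An argumentation system of Deductive ASPIC⊖: satisfiable axioms, defeasible rules,
a (partial) naming function and a total preorder on defeasible rules.  The strict rules
are the axiomatic rules together with all consequence-based rules. -/
structure ASys (L : Logic) where
  AX : Set L.F
  AX_sat : ∃ i, ∀ φ ∈ AX, L.Models i φ
  Rd : Set (Rule L)
  name : Rule L → Option L.F
  rpref : Rule L → Rule L → Prop
  rpref_refl : ∀ r, rpref r r
  rpref_trans : ∀ r s t, rpref r s → rpref s t → rpref r t
  rpref_total : ∀ r s, rpref r s ∨ rpref s r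

/-- Top-rule kinds: axiomatic, consequence-based strict, defeasible. -/
inductive RK : Type
  | ax | cb | df
deriving DecidableEq

/-- Argument trees (with the kind of the top rule and the conclusion recorded). -/
inductive Arg (L : Logic) : Type
  | node (k : RK) (subs : List (Arg L)) (concl : L.F)

def Arg.concl {L : Logic} : Arg L → L.F
  | .node _ _ φ => φ

def Arg.subs {L : Logic} : Arg L → List (Arg L)
  | .node _ s _ => s

def Arg.kind {L : Logic} : Arg L → RK
  | .node k _ _ => k

/-- Well-formed arguments of an argumentation system. -/
inductive Wf (L : Logic) (as : ASys L) : Arg L → Prop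
  | ax (φ : L.F) (h : φ ∈ as.AX) : Wf L as (.node .ax [] φ)
  | cb (subs : List (Arg L)) (φ : L.F) (hs : ∀ a ∈ subs, Wf L as a)
      (h : Conseq L {ψ | ∃ a ∈ subs, Arg.concl a = ψ} φ) : Wf L as (.node .cb subs φ)
  | df (subs : List (Arg L)) (φ : L.F) (hs : ∀ a ∈ subs, Wf L as a)
      (h : (subs.map Arg.concl, φ) ∈ as.Rd) : Wf L as (.node .df subs φ)

/-- Sub-argument relation: `Sub a b` means a is a sub-argument of b. -/
inductive Sub (L : Logic) : Arg L → Arg L → Prop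
  | refl (a : Arg L) : Sub L a a
  | step (a b : Arg L) (k : RK) (subs : List (Arg L)) (φ : L.F)
      (hb : b ∈ subs) (h : Sub L a b) : Sub L a (.node k subs φ)

/-- Conclusions of the sub-arguments of a. -/
def SubC (L : Logic) (a : Arg L) : Set L.F := {φ | ∃ b, Sub L b a ∧ Arg.concl b = φ}

/-- Axiomatic and defeasible sub-arguments. -/
def ADSub (L : Logic) (a : Arg L) : Set (Arg L) := {b | Sub L b a ∧ Arg.kind b ≠ RK.cb}

/-- Conclusions of the axiomatic and defeasible sub-arguments. -/
def ADSubC (L : Logic) (a : Arg L) : Set L.F :=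
  {φ | ∃ b, Sub L b a ∧ Arg.kind b ≠ RK.cb ∧ Arg.concl b = φ}

/-- Defeasible rules used in an argument. -/
def DR (L : Logic) (a : Arg L) : Set (Rule L) :=
  {r | ∃ subs, Sub L (Arg.node RK.df subs r.2) a ∧ r.1 = subs.map Arg.concl}

/-- Strict arguments: no defeasible rules used. -/
def IsStrictArg (L : Logic) (a : Arg L) : Prop := DR L a = ∅

/-- Elitist weakest-link lifting of the rule preorder to arguments (a ⪯_ewl b). -/
def ewl (L : Logic) (as : ASys L) (a b : Arg L) : Prop :=
  (DR L a = ∅ ∧ DR L b = ∅) ∨ ∃ ra ∈ DR L a, ∀ rb ∈ DR L b, as.rpref ra rb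

/-- a undercuts b: the conclusion of a is the negation of the name of a defeasible rule
used in b. -/
def Undercuts (L : Logic) (as : ASys L) (a b : Arg L) : Prop :=
  ∃ subs φ, Sub L (Arg.node RK.df subs φ) b ∧
    ∃ nm, as.name (subs.map Arg.concl, φ) = some nm ∧ negOf L (Arg.concl a) nm

/-- a gen-rebuts b: b is defeasible and the conclusion of a is the negation of a conjunction
of conclusions of sub-arguments of b. -/
def GenRebuts (L : Logic) (a b : Arg L) : Prop :=
  DR L b ≠ ∅ ∧ ∃ (φ : L.F) (l : List L.F),
    (∀ χ ∈ φ :: l, χ ∈ SubC L b) ∧ Arg.concl a = L.neg (conjL L φ l)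

/-- a defeats b: a undercuts b, or a gen-rebuts b and a is not strictly weaker than b. -/
def Defeats (L : Logic) (as : ASys L) (a b : Arg L) : Prop :=
  Undercuts L as a b ∨
    (GenRebuts L a b ∧ ¬ (ewl L as a b ∧ ¬ ewl L as b a))

/-- The strict rules of an argumentation system: axiomatic or consequence-based. -/
def StrictRule (L : Logic) (as : ASys L) (r : Rule L) : Prop :=
  (r.1 = [] ∧ r.2 ∈ as.AX) ∨ Conseq L {φ | φ ∈ r.1} r.2

end ASPIC

/-! Consequence-based steps are valid, so by induction on `b` every conclusion in `Sub(b)^C`,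
in particular every member of `Γ`, follows from `ADSub(b)^C`; contraposing, `¬⋀Γ` entails
`¬⋀ ADSub(b)^C`. Since `b` has finitely many sub-arguments and, being defeasible, at least one
defeasible one, `ADSub(b)^C` can be listed as `φ :: l`. -/

theorem Set.Finite.exists_cons_list {α : Type*} {s : Set α} (hfin : s.Finite)
    (hne : s.Nonempty) : ∃ (x : α) (l : List α), {y | y ∈ x :: l} = s := by
  lift s to Finset α using hfin
  obtain ⟨x, l, hl⟩ := List.exists_cons_of_ne_nil
    (Finset.toList_eq_nil.not.2 (Finset.coe_nonempty.1 hne).ne_empty)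
  refine ⟨x, l, ?_⟩
  ext y
  simp [← hl]

namespace ASPIC

variable {L : Logic}

theorem Sub.trans {a b c : Arg L} (hab : Sub L a b) (hbc : Sub L b c) : Sub L a c := by
  induction hbc with
  | refl => exact hab
  | step x k subs φ hx _ ih => exact Sub.step _ _ _ _ _ hx ih

theorem sub_node_iff {c : Arg L} {k : RK} {subs : List (Arg L)} {φ : L.F} :
    Sub L c (.node k subs φ) ↔ c = .node k subs φ ∨ ∃ x ∈ subs, Sub L c x := by
  constructor
  · intro h
    cases h with
    | refl => exact Or.inl rfl
    | step x _ _ _ hx hcx => exact Or.inr ⟨x, hx, hcx⟩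
  · rintro (rfl | ⟨x, hx, hcx⟩)
    · exact Sub.refl _
    · exact Sub.step _ _ _ _ _ hx hcx

theorem finite_setOf_sub : ∀ b : Arg L, {c | Sub L c b}.Finite
  | .node k subs φ => by
    have hsplit : {c | Sub L c (.node k subs φ)} =
        insert (.node k subs φ) (⋃ x ∈ subs, {c | Sub L c x}) := by
      ext c
      simp [sub_node_iff]
    rw [hsplit]
    exact (subs.finite_toSet.biUnion fun x hx => finite_setOf_sub x).insert _
  termination_by b => sizeOf b
  decreasing_by
    have : sizeOf x < sizeOf subs := List.sizeOf_lt_of_mem hx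
    simp only [Arg.node.sizeOf_spec]
    omega

theorem ADSubC_finite (b : Arg L) : (ADSubC L b).Finite := by
  refine ((finite_setOf_sub b).image Arg.concl).subset ?_
  rintro _ ⟨c, hc, -, rfl⟩
  exact ⟨c, hc, rfl⟩

theorem ADSubC_nonempty_of_DR_ne_empty {b : Arg L} (hb : DR L b ≠ ∅) :
    (ADSubC L b).Nonempty := by
  obtain ⟨r, subs, hsub, -⟩ := Set.nonempty_iff_ne_empty.2 hb
  exact ⟨_, _, hsub, RK.noConfusion, rfl⟩

theorem ADSubC_subset_of_mem {x : Arg L} {k : RK} {subs : List (Arg L)} {φ : L.F}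
    (hx : x ∈ subs) : ADSubC L x ⊆ ADSubC L (.node k subs φ) := by
  rintro _ ⟨c, hc, hk, rfl⟩
  exact ⟨c, hc.trans (Sub.step _ _ _ _ _ hx (.refl x)), hk, rfl⟩

theorem models_conjL_iff (i : L.I) :
    ∀ (φ : L.F) (l : List L.F), L.Models i (conjL L φ l) ↔ ∀ χ ∈ φ :: l, L.Models i χ
  | φ, [] => by simp [conjL]
  | φ, ψ :: l => by
    simp only [conjL, L.conj_spec, models_conjL_iff i ψ l, List.forall_mem_cons]

theorem Wf.models_concl_of_sub {as : ASys L} {b : Arg L} (hb : Wf L as b) {i : L.I}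
    (hi : ∀ φ ∈ ADSubC L b, L.Models i φ) {c : Arg L} (hc : Sub L c b) :
    L.Models i (Arg.concl c) := by
  induction hb generalizing c with
  | ax φ _ =>
    rcases sub_node_iff.1 hc with rfl | ⟨x, hx, -⟩
    · exact hi _ ⟨_, hc, RK.noConfusion, rfl⟩
    · simp at hx
  | cb subs φ _ hcon ih =>
    have ih' : ∀ x ∈ subs, ∀ {c}, Sub L c x → L.Models i (Arg.concl c) := fun x hx _ hcx =>
      ih x hx (fun ψ hψ => hi ψ (ADSubC_subset_of_mem hx hψ)) hcx
    rcases sub_node_iff.1 hc with rfl | ⟨x, hx, hcx⟩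
    · exact hcon i (by rintro _ ⟨x, hx, rfl⟩; exact ih' x hx (.refl x))
    · exact ih' x hx hcx
  | df subs φ _ _ ih =>
    rcases sub_node_iff.1 hc with rfl | ⟨x, hx, hcx⟩
    · exact hi _ ⟨_, hc, RK.noConfusion, rfl⟩
    · exact ih x hx (fun ψ hψ => hi ψ (ADSubC_subset_of_mem hx hψ)) hcx

theorem conseq_neg_conjL_of_models {φ ψ : L.F} {l m : List L.F}
    (h : ∀ i, (∀ χ ∈ φ :: l, L.Models i χ) → ∀ χ ∈ ψ :: m, L.Models i χ) :
    Conseq L {L.neg (conjL L ψ m)} (L.neg (conjL L φ l)) := by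
  intro i hi
  have hneg := hi _ rfl
  rw [L.neg_spec, models_conjL_iff] at hneg ⊢
  exact fun hφl => hneg (h i hφl)

end ASPIC

open ASPIC in
/-- If a gen-rebuts b, then there exists an argument a′ : a → ¬⋀ ADSub(b)^C,
i.e. the conjunction of the conclusions of the axiomatic and defeasible sub-arguments of b can
be listed as φ :: l with ¬(conjL φ l) a consequence of the conclusion of a, so that the
one-step strict argument with sub-argument a and that conclusion is well formed. -/
theorem one_step_attacker_exists (L : Logic) (as : ASys L)
    (a b : Arg L) (ha : Wf L as a) (hb : Wf L as b)
    (hgr : GenRebuts L a b) :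
    ∃ (φ : L.F) (l : List L.F),
      {χ | χ ∈ φ :: l} = ADSubC L b ∧
      Conseq L {Arg.concl a} (L.neg (conjL L φ l)) ∧
      Wf L as (Arg.node RK.cb [a] (L.neg (conjL L φ l))) := by
  obtain ⟨hdef, ψ, m, hsub, hconcl⟩ := hgr
  obtain ⟨φ, l, hlist⟩ :=
    (ADSubC_finite b).exists_cons_list (ADSubC_nonempty_of_DR_ne_empty hdef)
  have hconseq : Conseq L {Arg.concl a} (L.neg (conjL L φ l)) := by
    rw [hconcl]
    refine conseq_neg_conjL_of_models fun i hi χ hχ => ?_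
    obtain ⟨c, hc, rfl⟩ := hsub χ hχ
    exact hb.models_concl_of_sub (fun θ hθ => hi θ (by rwa [← hlist] at hθ)) hc
  refine ⟨φ, l, hlist, hconseq, Wf.cb [a] _ (by simpa using ha) ?_⟩
  simpa using hconseq
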